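/- Let G be a symmetric n×n integer matrix with det G ≠ 0, and suppose the lattice is odd, i.e. xᵀGx is odd for some x ∈ ℤⁿ. Let Lᵉᵛ = {x ∈ ℤⁿ : xᵀGx ∈ 2ℤ} be the even sublattice and let D = {y ∈ ℚⁿ : yᵀGx ∈ ℤ for all x ∈ ℤⁿ} be the dual lattice. Let R ⊂ ℚⁿ be a finite set of representatives for D modulo Lᵉᵛ, i.e. R ⊆ D and every element of D is congruent modulo Lᵉᵛ to exactly one element of R. Then Σ_{y ∈ R} exp(πi·yᵀGy) = 0. -/
import Mathlib


open Matrix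

private lemma aux_dot_symm {R : Type*} [CommRing R] {m : Type*} [Fintype m]
    (A : Matrix m m R) (hA : A.IsSymm) (u v : m → R) :
    u ⬝ᵥ A.mulVec v = v ⬝ᵥ A.mulVec u := by
  rw [Matrix.dotProduct_mulVec, ← Matrix.mulVec_transpose, hA.eq, dotProduct_comm]

private lemma aux_dot_expand_add {R : Type*} [CommRing R] {m : Type*} [Fintype m]
    (A : Matrix m m R) (hA : A.IsSymm) (u v : m → R) :
    (u + v) ⬝ᵥ A.mulVec (u + v) =
      u ⬝ᵥ A.mulVec u + 2 * (u ⬝ᵥ A.mulVec v) + v ⬝ᵥ A.mulVec v := by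
  rw [Matrix.mulVec_add, dotProduct_add, add_dotProduct,
    add_dotProduct, aux_dot_symm A hA v u]
  ring

private lemma aux_dot_expand_sub {R : Type*} [CommRing R] {m : Type*} [Fintype m]
    (A : Matrix m m R) (hA : A.IsSymm) (u v : m → R) :
    (u - v) ⬝ᵥ A.mulVec (u - v) =
      u ⬝ᵥ A.mulVec u - 2 * (u ⬝ᵥ A.mulVec v) + v ⬝ᵥ A.mulVec v := by
  have := aux_dot_expand_add A hA u (-v)
  simp only [Matrix.mulVec_neg, dotProduct_neg, neg_dotProduct] at this
  rw [← sub_eq_add_neg] at this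
  rw [this]; ring

private lemma aux_cast_dot {n : ℕ} (G : Matrix (Fin n) (Fin n) ℤ) (x y : Fin n → ℤ) :
    (fun i => ((x i : ℚ))) ⬝ᵥ (G.map (Int.cast : ℤ → ℚ)).mulVec (fun i => ((y i : ℚ)))
      = ((x ⬝ᵥ G.mulVec y : ℤ) : ℚ) := by
  simp only [Matrix.mulVec, dotProduct, Matrix.map_apply]
  push_cast
  rfl

/-- For an odd nondegenerate integral lattice with Gram matrix `G`,
the Gauss sum of `exp(πi·yᵀGy)` over a set of representatives of the dual lattice
`D` modulo the even sublattice `Lᵉᵛ` vanishes. -/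
theorem gauss_sum_dual_mod_even_sublattice_eq_zero
    {n : ℕ} (G : Matrix (Fin n) (Fin n) ℤ) (hG : G.IsSymm) (hdet : G.det ≠ 0)
    (hodd : ∃ x : Fin n → ℤ, Odd (x ⬝ᵥ G.mulVec x))
    (R : Finset (Fin n → ℚ))
    -- every element of `R` lies in the dual lattice `D`
    (hR : ∀ y ∈ R, ∀ x : Fin n → ℤ, ∃ m : ℤ,
      y ⬝ᵥ (G.map (Int.cast : ℤ → ℚ)).mulVec (fun i => (x i : ℚ)) = (m : ℚ))
    -- every element of `D` is congruent modulo `Lᵉᵛ` to exactly one element of `R`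
    (hreps : ∀ y : Fin n → ℚ,
      (∀ x : Fin n → ℤ, ∃ m : ℤ,
        y ⬝ᵥ (G.map (Int.cast : ℤ → ℚ)).mulVec (fun i => (x i : ℚ)) = (m : ℚ)) →
      ∃! r, r ∈ R ∧ ∃ x : Fin n → ℤ,
        (2 ∣ x ⬝ᵥ G.mulVec x) ∧ (∀ i, y i - r i = (x i : ℚ))) :
    ∑ y ∈ R, Complex.exp ((Real.pi : ℂ) * Complex.I *
        (((y ⬝ᵥ (G.map (Int.cast : ℤ → ℚ)).mulVec y) : ℚ) : ℂ)) = 0 := by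
  classical
  obtain ⟨x₀, hx₀⟩ := hodd
  set M : Matrix (Fin n) (Fin n) ℚ := G.map (Int.cast : ℤ → ℚ) with hMdef
  have hMsymm : M.IsSymm := hG.map _
  -- the dual-lattice condition
  set Dc : (Fin n → ℚ) → Prop :=
    fun y => ∀ x : Fin n → ℤ, ∃ m : ℤ, y ⬝ᵥ M.mulVec (fun i => (x i : ℚ)) = (m : ℚ)
    with hDcdef
  have hDadd : ∀ y, Dc y → ∀ z : Fin n → ℤ, Dc (y + fun i => ((z i : ℚ))) := by
    intro y hy z x
    obtain ⟨m₁, hm₁⟩ := hy x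
    refine ⟨m₁ + z ⬝ᵥ G.mulVec x, ?_⟩
    rw [add_dotProduct, hm₁, aux_cast_dot G z x]
    push_cast; ring
  have hRD : ∀ r ∈ R, Dc r := hR
  -- representative function
  set rep : (Fin n → ℚ) → (Fin n → ℚ) :=
    fun y => if h : Dc y then (hreps y h).choose else 0 with hrepdef
  have hrep_spec : ∀ y (h : Dc y), (rep y ∈ R ∧ ∃ x : Fin n → ℤ,
      (2 ∣ x ⬝ᵥ G.mulVec x) ∧ (∀ i, y i - rep y i = (x i : ℚ))) := by
    intro y h
    simp only [hrepdef, dif_pos h]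
    exact (hreps y h).choose_spec.1
  have hrep_uniq : ∀ y (h : Dc y), ∀ r, (r ∈ R ∧ ∃ x : Fin n → ℤ,
      (2 ∣ x ⬝ᵥ G.mulVec x) ∧ (∀ i, y i - r i = (x i : ℚ))) → r = rep y := by
    intro y h r hr
    simp only [hrepdef, dif_pos h]
    exact (hreps y h).choose_spec.2 r hr
  -- the translation maps
  set φ : (Fin n → ℚ) → (Fin n → ℚ) := fun r => rep (r + fun i => ((x₀ i : ℚ))) with hφdef
  set ψ : (Fin n → ℚ) → (Fin n → ℚ) := fun r => rep (r + fun i => (((-x₀) i : ℚ))) with hψdef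
  have hDφ : ∀ r ∈ R, Dc (r + fun i => ((x₀ i : ℚ))) := fun r hr => hDadd r (hRD r hr) x₀
  have hDψ : ∀ r ∈ R, Dc (r + fun i => (((-x₀) i : ℚ))) := fun r hr => hDadd r (hRD r hr) (-x₀)
  have hφmem : ∀ r ∈ R, φ r ∈ R := fun r hr => (hrep_spec _ (hDφ r hr)).1
  have hψmem : ∀ r ∈ R, ψ r ∈ R := fun r hr => (hrep_spec _ (hDψ r hr)).1
  -- inverse properties
  have hinv : ∀ r ∈ R, ψ (φ r) = r := by
    intro r hr
    obtain ⟨x, hxeven, hx⟩ := (hrep_spec _ (hDφ r hr)).2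
    refine (hrep_uniq _ (hDψ (φ r) (hφmem r hr)) r ⟨hr, ⟨-x, ?_, ?_⟩⟩).symm
    · have : (-x) ⬝ᵥ G.mulVec (-x) = x ⬝ᵥ G.mulVec x := by
        simp [Matrix.mulVec_neg, neg_dotProduct, dotProduct_neg]
      rw [this]; exact hxeven
    · intro i
      have h1 := hx i
      simp only [hφdef, Pi.add_apply, Pi.neg_apply, Int.cast_neg] at h1 ⊢
      linarith
  have hinv' : ∀ r ∈ R, φ (ψ r) = r := by
    intro r hr
    obtain ⟨x, hxeven, hx⟩ := (hrep_spec _ (hDψ r hr)).2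
    refine (hrep_uniq _ (hDφ (ψ r) (hψmem r hr)) r ⟨hr, ⟨-x, ?_, ?_⟩⟩).symm
    · have : (-x) ⬝ᵥ G.mulVec (-x) = x ⬝ᵥ G.mulVec x := by
        simp [Matrix.mulVec_neg, neg_dotProduct, dotProduct_neg]
      rw [this]; exact hxeven
    · intro i
      have h1 := hx i
      simp only [hψdef, Pi.add_apply, Pi.neg_apply, Int.cast_neg] at h1 ⊢
      linarith
  -- term relation
  have hterm : ∀ r ∈ R,
      Complex.exp ((Real.pi : ℂ) * Complex.I * (((r ⬝ᵥ M.mulVec r) : ℚ) : ℂ))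
      = - Complex.exp ((Real.pi : ℂ) * Complex.I * (((φ r ⬝ᵥ M.mulVec (φ r)) : ℚ) : ℂ)) := by
    intro r hr
    obtain ⟨x, hxeven, hx⟩ := (hrep_spec _ (hDφ r hr)).2
    -- φ r = r + cast (x₀ - x)
    have hφr : φ r = r + fun i => (((x₀ - x) i : ℚ)) := by
      funext i
      have h1 := hx i
      simp only [hφdef, Pi.add_apply, Pi.sub_apply, Int.cast_sub] at h1 ⊢
      linarith
    obtain ⟨m, hm⟩ := hRD r hr (x₀ - x)
    set k : ℤ := (x₀ - x) ⬝ᵥ G.mulVec (x₀ - x) with hkdef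
    have hQφ : φ r ⬝ᵥ M.mulVec (φ r) = r ⬝ᵥ M.mulVec r + ((2 * m + k : ℤ) : ℚ) := by
      rw [hφr, aux_dot_expand_add M hMsymm, hm, aux_cast_dot G]
      push_cast; ring
    have hkodd : Odd (2 * m + k) := by
      have hexp : k = x₀ ⬝ᵥ G.mulVec x₀ - 2 * (x₀ ⬝ᵥ G.mulVec x) + x ⬝ᵥ G.mulVec x :=
        aux_dot_expand_sub G hG x₀ x
      obtain ⟨a, ha⟩ := hx₀
      obtain ⟨b, hb⟩ := hxeven
      exact ⟨m + a - (x₀ ⬝ᵥ G.mulVec x) + b, by rw [hexp]; omega⟩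
    rw [hQφ]
    push_cast
    rw [mul_add, Complex.exp_add]
    have : (Real.pi : ℂ) * Complex.I * ((2 * (m : ℂ) + (k : ℂ))) =
        ((2 * m + k : ℤ) : ℂ) * ((Real.pi : ℂ) * Complex.I) := by push_cast; ring
    rw [this, Complex.exp_int_mul, Complex.exp_pi_mul_I, hkodd.neg_one_zpow]
    ring
  -- assemble
  have key : ∑ y ∈ R, Complex.exp ((Real.pi : ℂ) * Complex.I * (((y ⬝ᵥ M.mulVec y) : ℚ) : ℂ))
      = ∑ y ∈ R, - Complex.exp ((Real.pi : ℂ) * Complex.I * (((y ⬝ᵥ M.mulVec y) : ℚ) : ℂ)) :=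
    Finset.sum_nbij' φ ψ hφmem hψmem hinv hinv' hterm
  rw [Finset.sum_neg_distrib] at key
  have h2 : (2 : ℂ) * ∑ y ∈ R, Complex.exp ((Real.pi : ℂ) * Complex.I *
      (((y ⬝ᵥ M.mulVec y) : ℚ) : ℂ)) = 0 := by linear_combination key
  have := mul_eq_zero.mp h2
  simp only [OfNat.ofNat_ne_zero, false_or] at this
  exact this
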